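/- Let $G$ be a graph with $e$ edges, where $\binom{m}{2} < e \le \binom{m+1}{2}$, and suppose $\Delta(G) \le \lfloor m/2 \rfloor - 1$. Then $G$ has a decomposition into matchings $H_1, \ldots, H_m$ with $e(H_i) \le e(H_{i+1}) \le e(H_i) + 1$ for all $i$; specifically, writing $t = e - \binom{m}{2}$, one has $e(H_i) = i$ for $i \le t$ and $e(H_i) = i - 1$ for $i > t$. -/

import Mathlib

/-!
With `k = ⌊m/2⌋` the hypothesis says `Δ(G) < k`, so Vizing's theorem (proved below by the usual
fan and Kempe chain argument) colours the edges properly with `k` colours. Swapping the two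
colours on a Kempe chain with one more `α`-edge than `β`-edges moves one edge from class `α` to
class `β`; repeating this, the class sizes can be made equal to any prescribed numbers that differ
pairwise by at most one. Pairing the target sizes `e(H_j)` and `e(H_{m+1-j})`, with one triple
when `m` is odd, splits the targets into `k` groups whose sums differ by at most one, and cutting
each colour class into pieces of the sizes in its group gives the matchings.
-/

/-- A set of edges is a matching if its edges are pairwise vertex-disjoint. -/
def IsMatchingEdgeSet {V : Type*} (M : Finset (Sym2 V)) : Prop :=
  (∀ e ∈ M, ¬ e.IsDiag) ∧ ∀ e ∈ M, ∀ f ∈ M, e ≠ f → ∀ v : V, ¬(v ∈ e ∧ v ∈ f)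

open Finset SimpleGraph

section Development

variable {V : Type*}

namespace IsMatchingEdgeSet

variable {M N : Finset (Sym2 V)}

theorem mono (hM : IsMatchingEdgeSet M) (h : N ⊆ M) : IsMatchingEdgeSet N :=
  ⟨fun e he => hM.1 e (h he), fun e he f hf hef v => hM.2 e (h he) f (h hf) hef v⟩

theorem eq_of_mem_of_mem (hM : IsMatchingEdgeSet M) {e f : Sym2 V} {v : V} (he : e ∈ M)
    (hf : f ∈ M) (hve : v ∈ e) (hvf : v ∈ f) : e = f :=
  by_contra fun hne => hM.2 e he f hf hne v ⟨hve, hvf⟩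

theorem card_filter_mem_le_one [DecidableEq V] (hM : IsMatchingEdgeSet M) (v : V) :
    #{e ∈ M | v ∈ e} ≤ 1 :=
  card_le_one.2 fun _ he _ hf =>
    hM.eq_of_mem_of_mem (mem_filter.1 he).1 (mem_filter.1 hf).1 (mem_filter.1 he).2
      (mem_filter.1 hf).2

end IsMatchingEdgeSet

namespace Finset

theorem exists_lt_of_sum_eq_of_ne {ι M : Type*} [AddCommMonoid M] [LinearOrder M]
    [IsOrderedCancelAddMonoid M] {s : Finset ι} {f g : ι → M}
    (h : ∑ i ∈ s, f i = ∑ i ∈ s, g i) (hne : ∃ i ∈ s, f i ≠ g i) :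
    ∃ i ∈ s, f i < g i := by
  by_contra! hle
  obtain ⟨i, hi, hfg⟩ := hne
  exact hfg ((sum_eq_sum_iff_of_le hle).1 h.symm i hi).symm

theorem exists_card_filter_eq_of_card_eq_sum {α ι : Type*} [DecidableEq α] [DecidableEq ι]
    [Nonempty ι] {J : Finset ι} {a : ι → ℕ} (S : Finset α) (hS : #S = ∑ j ∈ J, a j) :
    ∃ d : α → ι, (∀ x ∈ S, d x ∈ J) ∧ ∀ j ∈ J, #{x ∈ S | d x = j} = a j := by
  induction J using Finset.induction_on generalizing S with
  | empty =>
    rw [sum_empty, card_eq_zero] at hS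
    exact ⟨fun _ => Classical.arbitrary ι, by simp [hS], by simp⟩
  | insert j₀ J hj₀ ih =>
    rw [sum_insert hj₀] at hS
    obtain ⟨T, hTS, hT⟩ := exists_subset_card_eq (s := S) (n := a j₀) (by omega)
    obtain ⟨d, hdJ, hd⟩ := ih (S \ T) (by rw [card_sdiff_of_subset hTS]; omega)
    have hdS {x : α} (hx : x ∈ S) (hxT : x ∉ T) : d x ∈ J :=
      hdJ x (mem_sdiff.2 ⟨hx, hxT⟩)
    refine ⟨fun x => if x ∈ T then j₀ else d x, fun x hx => ?_, fun j hj => ?_⟩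
    · dsimp only
      split_ifs with hxT
      exacts [mem_insert_self _ _, mem_insert_of_mem (hdS hx hxT)]
    rcases mem_insert.1 hj with rfl | hj
    · convert hT using 2
      ext x
      simp only [mem_filter, ite_eq_left_iff]
      exact ⟨fun ⟨hx, h⟩ => by_contra fun hxT => hj₀ (h hxT ▸ hdS hx hxT),
        fun hx => ⟨hTS hx, fun h => absurd hx h⟩⟩
    · rw [← hd j hj]
      congr 1
      ext x
      simp only [mem_filter, mem_sdiff]
      split_ifs with hxT
      · exact ⟨fun h => absurd (h.2 ▸ hj) hj₀, fun h => absurd hxT h.1.2⟩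
      · exact ⟨fun h => ⟨⟨h.1, hxT⟩, h.2⟩, fun h => ⟨h.1.1, h.2⟩⟩

end Finset

theorem SimpleGraph.Reachable.of_forall_adj {G H : SimpleGraph V} {u v : V} (h : G.Reachable u v)
    (hGH : ∀ a b, G.Adj a b → H.Reachable a b) : H.Reachable u v := by
  obtain ⟨p⟩ := h
  induction p with
  | nil => rfl
  | cons hadj _ ih => exact (hGH _ _ hadj).trans ih

namespace Finset

variable (F : Finset (Sym2 V))

noncomputable def edgeComponent (e : Sym2 V) :
    (fromEdgeSet (F : Set (Sym2 V))).ConnectedComponent :=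
  (fromEdgeSet (F : Set (Sym2 V))).connectedComponentMk e.out.1

variable {F}

theorem connectedComponentMk_eq_edgeComponent {e : Sym2 V} (he : e ∈ F) {v : V} (hv : v ∈ e) :
    (fromEdgeSet (F : Set (Sym2 V))).connectedComponentMk v = F.edgeComponent e := by
  rcases eq_or_ne v e.out.1 with rfl | hne
  · rfl
  · have hvw : e = s(v, e.out.1) := (Sym2.mem_and_mem_iff hne).1 ⟨hv, e.out_fst_mem⟩
    exact ConnectedComponent.connectedComponentMk_eq_of_adj
      ((fromEdgeSet_adj _).2 ⟨by rw [← hvw]; exact_mod_cast he, hne⟩)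

section Counting

open Classical

variable [Fintype V] [DecidableEq V]

variable (κ : (fromEdgeSet (F : Set (Sym2 V))).ConnectedComponent)

theorem card_supp_toFinset_le : #κ.supp.toFinset ≤ #{e ∈ F | F.edgeComponent e = κ} + 1 := by
  have h := κ.connected_toSimpleGraph.card_vert_le_card_edgeSet_add_one
  change Nat.card κ.supp ≤ _ at h
  rw [Nat.card_eq_card_toFinset] at h
  refine h.trans (Nat.add_le_add_right ?_ 1)
  rw [← Nat.card_eq_finsetCard]
  refine Nat.card_le_card_of_injective (fun e => ⟨e.1.map Subtype.val, ?_⟩) ?_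
  · obtain ⟨e, he⟩ := e
    induction e using Sym2.ind with
    | h u w =>
      have hadj := (κ.toSimpleGraph_adj u.2 w.2).1 he
      have hF : s(u.1, w.1) ∈ F := by simpa using ((fromEdgeSet_adj _).1 hadj).1
      simp only [Sym2.map_mk, mem_filter]
      exact ⟨hF,
        (connectedComponentMk_eq_edgeComponent hF (Sym2.mem_mk_left _ _)).symm.trans u.2⟩
  · intro e f hef
    exact Subtype.ext (Sym2.map.injective Subtype.val_injective (congrArg Subtype.val hef))

variable {M : Finset (Sym2 V)}

theorem sum_card_filter_mem_eq (hMF : M ⊆ F) (hM : ∀ e ∈ M, ¬e.IsDiag) :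
    ∑ v ∈ κ.supp.toFinset, #{e ∈ M | v ∈ e} = 2 * #{e ∈ M | F.edgeComponent e = κ} := by
  have hfiber : ∀ e ∈ M,
      #{v ∈ κ.supp.toFinset | v ∈ e} = if F.edgeComponent e = κ then 2 else 0 := by
    intro e he
    split_ifs with hκ
    · rw [← Sym2.card_toFinset_of_not_isDiag e (hM e he)]
      congr 1
      ext v
      simp only [mem_filter, Set.mem_toFinset, ConnectedComponent.mem_supp_iff, Sym2.mem_toFinset,
        and_iff_right_iff_imp]
      exact fun hv => (connectedComponentMk_eq_edgeComponent (hMF he) hv).trans hκ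
    · refine card_eq_zero.2 (filter_eq_empty_iff.2 fun v hv hve => hκ ?_)
      rw [Set.mem_toFinset, ConnectedComponent.mem_supp_iff] at hv
      rw [← connectedComponentMk_eq_edgeComponent (hMF he) hve, hv]
  have hcount := sum_card_bipartiteAbove_eq_sum_card_bipartiteBelow (s := κ.supp.toFinset)
    (t := M) (r := fun v e => v ∈ e)
  simp only [bipartiteAbove, bipartiteBelow] at hcount
  rw [hcount, sum_congr rfl hfiber, ← sum_filter, sum_const, smul_eq_mul, mul_comm]

theorem two_mul_card_filter_edgeComponent_le (hM : IsMatchingEdgeSet M) (hMF : M ⊆ F) :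
    2 * #{e ∈ M | F.edgeComponent e = κ} ≤ #κ.supp.toFinset := by
  rw [← sum_card_filter_mem_eq κ hMF hM.1]
  simpa using sum_le_sum fun v (_ : v ∈ κ.supp.toFinset) => hM.card_filter_mem_le_one v

theorem card_filter_edgeComponent_le_add_one {A B : Finset (Sym2 V)}
    (hA : IsMatchingEdgeSet A) (hAF : A ⊆ F) (hF : F ⊆ A ∪ B) :
    #{e ∈ A | F.edgeComponent e = κ} ≤ #{e ∈ B | F.edgeComponent e = κ} + 1 := by
  have hsplit : #{e ∈ F | F.edgeComponent e = κ} ≤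
      #{e ∈ A | F.edgeComponent e = κ} + #{e ∈ B | F.edgeComponent e = κ} := by
    calc #{e ∈ F | F.edgeComponent e = κ} ≤ #{e ∈ A ∪ B | F.edgeComponent e = κ} :=
          card_le_card (filter_subset_filter _ hF)
      _ ≤ _ := by rw [filter_union]; exact card_union_le _ _
  have := two_mul_card_filter_edgeComponent_le κ hA hAF
  have := card_supp_toFinset_le κ
  omega

theorem card_filter_degree_le_one_le_two (hF : ∀ e ∈ F, ¬e.IsDiag)
    (hdeg : ∀ v, #{e ∈ F | v ∈ e} ≤ 2) :
    #{v ∈ κ.supp.toFinset | #{e ∈ F | v ∈ e} ≤ 1} ≤ 2 := by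
  have hsum := sum_card_filter_mem_eq κ subset_rfl hF
  rw [← sum_filter_add_sum_filter_not _ (fun v => #{e ∈ F | v ∈ e} ≤ 1)] at hsum
  have hlow := sum_le_sum
    fun v (hv : v ∈ {v ∈ κ.supp.toFinset | #{e ∈ F | v ∈ e} ≤ 1}) => (mem_filter.1 hv).2
  have hhigh := sum_le_sum
    fun v (_ : v ∈ {v ∈ κ.supp.toFinset | ¬#{e ∈ F | v ∈ e} ≤ 1}) => hdeg v
  have hcard := card_filter_add_card_filter_not (s := κ.supp.toFinset)
    (fun v => #{e ∈ F | v ∈ e} ≤ 1)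
  have := card_supp_toFinset_le κ
  simp only [sum_const, smul_eq_mul, mul_one] at hlow hhigh
  omega

end Counting

open Classical in
theorem exists_card_filter_edgeComponent_lt {A B : Finset (Sym2 V)} (hA : A ⊆ F)
    (hB : B ⊆ F) (h : #B < #A) :
    ∃ κ, #{e ∈ B | F.edgeComponent e = κ} < #{e ∈ A | F.edgeComponent e = κ} := by
  have hmaps {M : Finset (Sym2 V)} (hM : M ⊆ F) :
      ∀ e ∈ M, F.edgeComponent e ∈ F.image F.edgeComponent :=
    fun e he => mem_image_of_mem _ (hM he)
  rw [card_eq_sum_card_fiberwise (hmaps hA), card_eq_sum_card_fiberwise (hmaps hB)] at h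
  obtain ⟨κ, -, hκ⟩ := exists_lt_of_sum_lt h
  exact ⟨κ, hκ⟩

end Finset

section EdgeColoring

structure IsProperEdgeColoring (E : Finset (Sym2 V)) (k : ℕ) (c : Sym2 V → ℕ) : Prop where
  lt : ∀ e ∈ E, c e < k
  ne : ∀ e ∈ E, ∀ f ∈ E, e ≠ f → ∀ v ∈ e, v ∈ f → c e ≠ c f

def IsMissing (E : Finset (Sym2 V)) (c : Sym2 V → ℕ) (γ : ℕ) (v : V) : Prop :=
  ∀ e ∈ E, v ∈ e → c e ≠ γ

variable {E : Finset (Sym2 V)} {k : ℕ} {c : Sym2 V → ℕ}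

namespace IsProperEdgeColoring

theorem isMatchingEdgeSet_filter [DecidableEq V] (hc : IsProperEdgeColoring E k c)
    (hE : ∀ e ∈ E, ¬e.IsDiag) (γ : ℕ) : IsMatchingEdgeSet {e ∈ E | c e = γ} := by
  refine ⟨fun e he => hE e (mem_filter.1 he).1, fun e he f hf hef v hv => ?_⟩
  rw [mem_filter] at he hf
  exact hc.ne e he.1 f hf.1 hef v hv.1 hv.2 (he.2.trans hf.2.symm)

theorem update_insert [DecidableEq V] (hc : IsProperEdgeColoring E k c) {f : Sym2 V} {γ : ℕ}
    (hγ : γ < k) (hf : ∀ v ∈ f, IsMissing E c γ v) :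
    IsProperEdgeColoring (insert f E) k (Function.update c f γ) := by
  have hkeep : ∀ e ∈ insert f E, e ≠ f → e ∈ E ∧ Function.update c f γ e = c e :=
    fun e he hef => ⟨(mem_insert.1 he).resolve_left hef, Function.update_of_ne hef _ _⟩
  refine ⟨fun e he => ?_, fun e he e' he' hee' v hve hve' => ?_⟩
  · by_cases hef : e = f
    · rw [hef, Function.update_self]; exact hγ
    · rw [(hkeep e he hef).2]; exact hc.lt e (hkeep e he hef).1
  · by_cases hef : e = f <;> by_cases he'f : e' = f
    · exact absurd (hef.trans he'f.symm) hee'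
    · rw [hef, Function.update_self, (hkeep e' he' he'f).2]
      exact (hf v (hef ▸ hve) e' (hkeep e' he' he'f).1 hve').symm
    · rw [he'f, Function.update_self, (hkeep e he hef).2]
      exact hf v (he'f ▸ hve') e (hkeep e he hef).1 hve
    · rw [(hkeep e he hef).2, (hkeep e' he' he'f).2]
      exact hc.ne e (hkeep e he hef).1 e' (hkeep e' he' he'f).1 hee' v hve hve'

end IsProperEdgeColoring

theorem exists_isMissing [Fintype V] [DecidableEq V] (G : SimpleGraph V) [DecidableRel G.Adj]
    (hE : E ⊆ G.edgeFinset) {v : V} (hv : G.degree v < k) : ∃ γ < k, IsMissing E c γ v := by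
  have hcard : #({e ∈ E | v ∈ e}.image c) < #(range k) := by
    calc #({e ∈ E | v ∈ e}.image c) ≤ #{e ∈ E | v ∈ e} := card_image_le
      _ ≤ #(G.incidenceFinset v) := card_le_card fun e he => by
          rw [mem_filter] at he
          rw [incidenceFinset_eq_filter, mem_filter]
          exact ⟨hE he.1, he.2⟩
      _ < #(range k) := by rwa [card_incidenceFinset_eq_degree, card_range]
  obtain ⟨γ, hγ, hγc⟩ := exists_mem_notMem_of_card_lt_card hcard
  exact ⟨γ, mem_range.1 hγ, fun e he hve hce =>
    hγc (mem_image.2 ⟨e, mem_filter.2 ⟨he, hve⟩, hce⟩)⟩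

end EdgeColoring

section Kempe

def twoColorEdges (E : Finset (Sym2 V)) (c : Sym2 V → ℕ) (α β : ℕ) : Finset (Sym2 V) :=
  {e ∈ E | c e = α ∨ c e = β}

abbrev kempeGraph (E : Finset (Sym2 V)) (c : Sym2 V → ℕ) (α β : ℕ) : SimpleGraph V :=
  fromEdgeSet (twoColorEdges E c α β : Set (Sym2 V))

open Classical

/-- `Equiv.swap α β` fixes the other colours, so only the `α`/`β`-edges of the chain `κ`
change. -/
noncomputable def kempeSwap (E : Finset (Sym2 V)) (c : Sym2 V → ℕ) (α β : ℕ)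
    (κ : (kempeGraph E c α β).ConnectedComponent) (e : Sym2 V) : ℕ :=
  if (twoColorEdges E c α β).edgeComponent e = κ then Equiv.swap α β (c e) else c e

variable {E : Finset (Sym2 V)} {k : ℕ} {c : Sym2 V → ℕ} {α β γ : ℕ}
  {κ : (kempeGraph E c α β).ConnectedComponent}

@[simp]
theorem mem_twoColorEdges {e : Sym2 V} :
    e ∈ twoColorEdges E c α β ↔ e ∈ E ∧ (c e = α ∨ c e = β) :=
  mem_filter

theorem kempeGraph_adj {u w : V} :
    (kempeGraph E c α β).Adj u w ↔
      s(u, w) ∈ E ∧ (c s(u, w) = α ∨ c s(u, w) = β) ∧ u ≠ w := by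
  simp [twoColorEdges, and_assoc]

theorem kempeSwap_apply_of_mem {e : Sym2 V} (he : e ∈ E) {v : V} (hv : v ∈ e) :
    kempeSwap E c α β κ e =
      if (kempeGraph E c α β).connectedComponentMk v = κ then Equiv.swap α β (c e)
      else c e := by
  by_cases hce : c e = α ∨ c e = β
  · rw [kempeSwap,
      ← connectedComponentMk_eq_edgeComponent (mem_twoColorEdges.2 ⟨he, hce⟩) hv]
  · push Not at hce
    rw [kempeSwap, Equiv.swap_apply_of_ne_of_ne hce.1 hce.2, ite_self, ite_self]

theorem kempeSwap_eq_iff {e : Sym2 V} :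
    kempeSwap E c α β κ e = γ ↔
      c e = if (twoColorEdges E c α β).edgeComponent e = κ then Equiv.swap α β γ else γ := by
  unfold kempeSwap
  split_ifs <;> simp [Equiv.swap_apply_eq_iff]

theorem IsProperEdgeColoring.kempeSwap (hc : IsProperEdgeColoring E k c) (hα : α < k)
    (hβ : β < k) : IsProperEdgeColoring E k (kempeSwap E c α β κ) := by
  refine ⟨fun e he => ?_, fun e he f hf hef v hve hvf => ?_⟩
  · rw [kempeSwap_apply_of_mem he e.out_fst_mem]
    split_ifs
    · rw [Equiv.swap_apply_def]
      split_ifs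
      exacts [hβ, hα, hc.lt e he]
    · exact hc.lt e he
  · rw [kempeSwap_apply_of_mem he hve, kempeSwap_apply_of_mem hf hvf]
    split_ifs
    · exact (Equiv.injective _).ne (hc.ne e he f hf hef v hve hvf)
    · exact hc.ne e he f hf hef v hve hvf

theorem IsMissing.kempeSwap_of_ne {v : V} (h : IsMissing E c γ v)
    (hv : (kempeGraph E c α β).connectedComponentMk v ≠ κ) :
    IsMissing E (kempeSwap E c α β κ) γ v := fun e he hve => by
  rw [kempeSwap_apply_of_mem he hve, if_neg hv]
  exact h e he hve

theorem IsMissing.kempeSwap_of_eq {v : V} (h : IsMissing E c γ v)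
    (hv : (kempeGraph E c α β).connectedComponentMk v = κ) :
    IsMissing E (kempeSwap E c α β κ) (Equiv.swap α β γ) v := fun e he hve => by
  rw [kempeSwap_apply_of_mem he hve, if_pos hv]
  exact (Equiv.injective _).ne (h e he hve)

theorem card_filter_kempeSwap_add :
    #{e ∈ E | kempeSwap E c α β κ e = γ} +
        #{e ∈ {e ∈ E | c e = γ} | (twoColorEdges E c α β).edgeComponent e = κ} =
      #{e ∈ E | c e = γ} +
        #{e ∈ {e ∈ E | c e = Equiv.swap α β γ} |
          (twoColorEdges E c α β).edgeComponent e = κ} := by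
  have hsplit : {e ∈ E | kempeSwap E c α β κ e = γ} =
      {e ∈ {e ∈ E | c e = Equiv.swap α β γ} |
          (twoColorEdges E c α β).edgeComponent e = κ} ∪
        {e ∈ {e ∈ E | c e = γ} | ¬(twoColorEdges E c α β).edgeComponent e = κ} := by
    ext e
    simp only [mem_filter, mem_union, kempeSwap_eq_iff]
    split_ifs <;> tauto
  rw [hsplit, card_union_of_disjoint (disjoint_filter_filter_not _ _ _)]
  have := card_filter_add_card_filter_not (s := {e ∈ E | c e = γ})
    (fun e => (twoColorEdges E c α β).edgeComponent e = κ)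
  omega

theorem IsProperEdgeColoring.exists_rebalance [Fintype V] [DecidableEq V]
    (hc : IsProperEdgeColoring E k c) (hE : ∀ e ∈ E, ¬e.IsDiag) (hα : α < k) (hβ : β < k)
    (hlt : #{e ∈ E | c e = β} < #{e ∈ E | c e = α}) :
    ∃ c', IsProperEdgeColoring E k c' ∧ #{e ∈ E | c' e = α} + 1 = #{e ∈ E | c e = α} ∧
      #{e ∈ E | c' e = β} = #{e ∈ E | c e = β} + 1 ∧
      ∀ γ, γ ≠ α → γ ≠ β → #{e ∈ E | c' e = γ} = #{e ∈ E | c e = γ} := by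
  have hAF : {e ∈ E | c e = α} ⊆ twoColorEdges E c α β := fun e he => by
    rw [mem_filter] at he; exact mem_twoColorEdges.2 ⟨he.1, Or.inl he.2⟩
  have hBF : {e ∈ E | c e = β} ⊆ twoColorEdges E c α β := fun e he => by
    rw [mem_filter] at he; exact mem_twoColorEdges.2 ⟨he.1, Or.inr he.2⟩
  have hFAB : twoColorEdges E c α β ⊆ {e ∈ E | c e = α} ∪ {e ∈ E | c e = β} := by
    rw [← filter_or]; exact subset_rfl
  obtain ⟨κ, hκ⟩ := exists_card_filter_edgeComponent_lt hAF hBF hlt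
  have halt :=
    card_filter_edgeComponent_le_add_one κ (hc.isMatchingEdgeSet_filter hE α) hAF hFAB
  refine ⟨_root_.kempeSwap E c α β κ, hc.kempeSwap hα hβ, ?_, ?_, fun γ hγα hγβ => ?_⟩
  · have := card_filter_kempeSwap_add (κ := κ) (γ := α)
    rw [Equiv.swap_apply_left] at this
    omega
  · have := card_filter_kempeSwap_add (κ := κ) (γ := β)
    rw [Equiv.swap_apply_right] at this
    omega
  · have := card_filter_kempeSwap_add (κ := κ) (γ := γ)
    rw [Equiv.swap_apply_of_ne_of_ne hγα hγβ] at this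
    omega

end Kempe

section KempeChain

variable [DecidableEq V] {E : Finset (Sym2 V)} {k : ℕ} {c : Sym2 V → ℕ} {α β : ℕ}

theorem filter_twoColorEdges_mem (v : V) :
    {e ∈ twoColorEdges E c α β | v ∈ e} =
      {e ∈ {e ∈ E | c e = α} | v ∈ e} ∪ {e ∈ {e ∈ E | c e = β} | v ∈ e} := by
  ext e
  simp only [mem_filter, mem_union, mem_twoColorEdges]
  tauto

theorem IsProperEdgeColoring.card_twoColorEdges_mem_le_two (hc : IsProperEdgeColoring E k c)
    (hE : ∀ e ∈ E, ¬e.IsDiag) (v : V) : #{e ∈ twoColorEdges E c α β | v ∈ e} ≤ 2 := by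
  rw [filter_twoColorEdges_mem]
  have := (hc.isMatchingEdgeSet_filter hE α).card_filter_mem_le_one v
  have := (hc.isMatchingEdgeSet_filter hE β).card_filter_mem_le_one v
  exact (card_union_le _ _).trans (by omega)

theorem IsProperEdgeColoring.card_twoColorEdges_mem_le_one (hc : IsProperEdgeColoring E k c)
    (hE : ∀ e ∈ E, ¬e.IsDiag) {v : V} (hv : IsMissing E c α v ∨ IsMissing E c β v) :
    #{e ∈ twoColorEdges E c α β | v ∈ e} ≤ 1 := by
  have hempty {γ : ℕ} (hγ : IsMissing E c γ v) :
      {e ∈ {e ∈ E | c e = γ} | v ∈ e} = ∅ :=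
    filter_eq_empty_iff.2 fun e he hve => hγ e (mem_filter.1 he).1 hve (mem_filter.1 he).2
  rw [filter_twoColorEdges_mem]
  rcases hv with hv | hv
  · rw [hempty hv, empty_union]
    exact (hc.isMatchingEdgeSet_filter hE β).card_filter_mem_le_one v
  · rw [hempty hv, union_empty]
    exact (hc.isMatchingEdgeSet_filter hE α).card_filter_mem_le_one v

/-- A Kempe chain is a path or a cycle, so at most two of its vertices miss `α` or `β`. -/
theorem IsProperEdgeColoring.not_reachable_of_isMissing [Fintype V]
    (hc : IsProperEdgeColoring E k c) (hE : ∀ e ∈ E, ¬e.IsDiag) {u v w : V} (huv : u ≠ v)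
    (huw : u ≠ w) (hvw : v ≠ w) (hu : IsMissing E c α u ∨ IsMissing E c β u)
    (hv : IsMissing E c α v ∨ IsMissing E c β v)
    (hw : IsMissing E c α w ∨ IsMissing E c β w)
    (hreach : (kempeGraph E c α β).Reachable u v) :
    ¬(kempeGraph E c α β).Reachable u w := by
  classical
  intro hreach'
  set κ := (kempeGraph E c α β).connectedComponentMk u
  have hmem {a : V} (ha : (kempeGraph E c α β).Reachable u a)
      (hdeg : #{e ∈ twoColorEdges E c α β | a ∈ e} ≤ 1) :
      a ∈ {a ∈ κ.supp.toFinset | #{e ∈ twoColorEdges E c α β | a ∈ e} ≤ 1} := by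
    rw [mem_filter, Set.mem_toFinset, ConnectedComponent.mem_supp_iff, ConnectedComponent.eq]
    exact ⟨ha.symm, hdeg⟩
  have hsub : {u, v, w} ⊆
      {a ∈ κ.supp.toFinset | #{e ∈ twoColorEdges E c α β | a ∈ e} ≤ 1} := by
    intro a ha
    simp only [mem_insert, mem_singleton] at ha
    rcases ha with rfl | rfl | rfl
    · exact hmem .rfl (hc.card_twoColorEdges_mem_le_one hE hu)
    · exact hmem hreach (hc.card_twoColorEdges_mem_le_one hE hv)
    · exact hmem hreach' (hc.card_twoColorEdges_mem_le_one hE hw)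
  have h3 := card_le_card hsub
  rw [card_insert_of_notMem (by simp [huv, huw]), card_insert_of_notMem (by simp [hvw]),
    card_singleton] at h3
  have := card_filter_degree_le_one_le_two κ (fun e he => hE e (mem_twoColorEdges.1 he).1)
    (hc.card_twoColorEdges_mem_le_two hE)
  omega

theorem IsProperEdgeColoring.exists_insert_of_not_reachable (hc : IsProperEdgeColoring E k c)
    (hα : α < k) (hβ : β < k) {x w : V} (hx : IsMissing E c α x) (hw : IsMissing E c β w)
    (hxw : ¬(kempeGraph E c α β).Reachable x w) :
    ∃ c', IsProperEdgeColoring (insert s(x, w) E) k c' := by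
  set κ := (kempeGraph E c α β).connectedComponentMk w
  refine ⟨_, (hc.kempeSwap (κ := κ) hα hβ).update_insert hα fun v hv => ?_⟩
  rcases Sym2.mem_iff.1 hv with rfl | rfl
  · exact hx.kempeSwap_of_ne fun h => hxw (ConnectedComponent.eq.1 h)
  · simpa using hw.kempeSwap_of_eq (κ := κ) rfl

end KempeChain

theorem IsProperEdgeColoring.exists_card_filter_eq [Fintype V] [DecidableEq V]
    {E : Finset (Sym2 V)} {k : ℕ} {c : Sym2 V → ℕ} (hc : IsProperEdgeColoring E k c)
    (hE : ∀ e ∈ E, ¬e.IsDiag) {n : ℕ → ℕ} (hsum : ∑ i ∈ range k, n i = #E)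
    (hn : ∀ i < k, ∀ j < k, n i ≤ n j + 1) :
    ∃ c', IsProperEdgeColoring E k c' ∧ ∀ i < k, #{e ∈ E | c' e = i} = n i := by
  induction hΦ : ∑ i ∈ range k, (#{e ∈ E | c e = i} - n i + (n i - #{e ∈ E | c e = i}))
    using Nat.strong_induction_on generalizing c with
  | _ Φ ih =>
  by_cases hdone : ∀ i < k, #{e ∈ E | c e = i} = n i
  · exact ⟨c, hc, hdone⟩
  have hne : ∃ i ∈ range k, #{e ∈ E | c e = i} ≠ n i := by
    push Not at hdone
    obtain ⟨i, hi, h⟩ := hdone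
    exact ⟨i, mem_range.2 hi, h⟩
  have hsumc : ∑ i ∈ range k, #{e ∈ E | c e = i} = #E :=
    (card_eq_sum_card_fiberwise fun e he => mem_range.2 (hc.lt e he)).symm
  obtain ⟨α, hα, hαlt⟩ := exists_lt_of_sum_eq_of_ne (hsum.trans hsumc.symm)
    (hne.imp fun _ h => ⟨h.1, h.2.symm⟩)
  obtain ⟨β, hβ, hβlt⟩ := exists_lt_of_sum_eq_of_ne (hsumc.trans hsum.symm) hne
  rw [mem_range] at hα hβ
  have hnβ := hn β hβ α hα
  obtain ⟨c', hc', hc'α, hc'β, hc'γ⟩ := hc.exists_rebalance hE hα hβ (by omega)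
  refine ih _ ?_ hc' rfl
  rw [← hΦ]
  refine sum_lt_sum (fun i _ => ?_) ⟨α, mem_range.2 hα, by omega⟩
  by_cases hiα : i = α
  · subst hiα; omega
  by_cases hiβ : i = β
  · subst hiβ; omega
  rw [hc'γ i hiα hiβ]

section Vizing

variable {E : Finset (Sym2 V)} {k : ℕ} {c : Sym2 V → ℕ} {x z : V} {y : ℕ → V}
  {ℓ j : ℕ}

structure IsFan (E : Finset (Sym2 V)) (c : Sym2 V → ℕ) (x : V) (y : ℕ → V) (ℓ : ℕ) :
    Prop where
  injOn : Set.InjOn y (Set.Iic ℓ)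
  ne : ∀ i ≤ ℓ, y i ≠ x
  not_mem : s(x, y 0) ∉ E
  mem : ∀ i < ℓ, s(x, y (i + 1)) ∈ E
  missing : ∀ i < ℓ, IsMissing E c (c s(x, y (i + 1))) (y i)

namespace IsFan

theorem mk_eq_mk_iff (hfan : IsFan E c x y ℓ) {i i' : ℕ} (hi : i ≤ ℓ) (hi' : i' ≤ ℓ) :
    s(x, y i) = s(x, y i') ↔ i = i' :=
  Sym2.congr_right.trans ⟨fun h => hfan.injOn (Set.mem_Iic.2 hi) (Set.mem_Iic.2 hi') h,
    congrArg y⟩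

theorem succ_le_card [Fintype V] (hfan : IsFan E c x y ℓ) : ℓ + 1 ≤ Fintype.card V := by
  have h := card_le_card_of_injOn y (s := range (ℓ + 1)) (t := univ) (fun _ _ => mem_univ _)
    (hfan.injOn.mono fun i hi => by simp at hi ⊢; omega)
  rwa [card_range, card_univ] at h

theorem update (hfan : IsFan E c x y ℓ) (hz : s(x, z) ∈ E) (hzx : z ≠ x)
    (hmiss : IsMissing E c (c s(x, z)) (y ℓ)) (hnew : ∀ i < ℓ, z ≠ y (i + 1)) :
    IsFan E c x (Function.update y (ℓ + 1) z) (ℓ + 1) := by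
  have hy {i : ℕ} (hi : i ≤ ℓ) : Function.update y (ℓ + 1) z i = y i :=
    Function.update_of_ne (by omega) _ _
  have hzy {i : ℕ} (hi : i ≤ ℓ) : z ≠ y i := by
    rcases i with _ | i
    · exact fun h => hfan.not_mem (h ▸ hz)
    · exact hnew i (by omega)
  refine ⟨fun i hi i' hi' h => ?_, fun i hi => ?_, ?_, fun i hi => ?_, fun i hi => ?_⟩
  · rw [Set.mem_Iic] at hi hi'
    rcases hi.lt_or_eq with hi | rfl <;> rcases hi'.lt_or_eq with hi' | rfl
    · rw [hy (i := i) (by omega), hy (i := i') (by omega)] at h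
      exact hfan.injOn (Set.mem_Iic.2 (by omega)) (Set.mem_Iic.2 (by omega)) h
    · rw [hy (i := i) (by omega), Function.update_self] at h
      exact absurd h.symm (hzy (by omega))
    · rw [hy (i := i') (by omega), Function.update_self] at h
      exact absurd h (hzy (by omega))
    · rfl
  · rcases hi.lt_or_eq with hi | rfl
    · rw [hy (by omega)]; exact hfan.ne i (by omega)
    · rw [Function.update_self]; exact hzx
  · rw [hy (Nat.zero_le _)]; exact hfan.not_mem
  · rcases (Nat.lt_succ_iff.1 hi).lt_or_eq with hi | rfl
    · rw [hy (by omega)]; exact hfan.mem i hi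
    · rw [Function.update_self]; exact hz
  · rcases (Nat.lt_succ_iff.1 hi).lt_or_eq with hi | rfl
    · rw [hy (by omega), hy (by omega)]; exact hfan.missing i hi
    · rw [hy le_rfl, Function.update_self]; exact hmiss

theorem color_ne_of_lt (hfan : IsFan E c x y ℓ) (hc : IsProperEdgeColoring E k c) (hj : j ≤ ℓ)
    {i : ℕ} (hi : i < j) {f : Sym2 V} (hf : f ∈ E) (hfj : f ≠ s(x, y j))
    (hfi : ∀ i < j, f ≠ s(x, y i)) {v : V} (hv : v ∈ s(x, y i)) (hvf : v ∈ f) :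
    c s(x, y (i + 1)) ≠ c f := by
  rcases Sym2.mem_iff.1 hv with rfl | rfl
  · refine hc.ne _ (hfan.mem i (by omega)) f hf (fun h => ?_) v (Sym2.mem_mk_left _ _) hvf
    rcases (Nat.succ_le_of_lt hi).lt_or_eq with h' | h'
    · exact hfi _ h' h.symm
    · exact hfj (h' ▸ h.symm)
  · exact (hfan.missing i (by omega) f hf hvf).symm

end IsFan

variable [DecidableEq V]

def rotate (c : Sym2 V → ℕ) (x : V) (y : ℕ → V) : ℕ → Sym2 V → ℕ
  | 0 => c
  | j + 1 => Function.update (rotate c x y j) s(x, y j) (c s(x, y (j + 1)))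

theorem rotate_apply_of_lt (hy : Set.InjOn y (Set.Iio j)) {i : ℕ} (hi : i < j) :
    rotate c x y j s(x, y i) = c s(x, y (i + 1)) := by
  induction j with
  | zero => omega
  | succ j ih =>
    rcases Nat.lt_succ_iff_lt_or_eq.1 hi with hij | rfl
    · have hne : s(x, y i) ≠ s(x, y j) := fun h =>
        hij.ne (hy (by simp; omega) (by simp) (Sym2.congr_right.1 h))
      rw [rotate, Function.update_of_ne hne, ih (hy.mono fun _ h => by simp at h ⊢; omega) hij]
    · rw [rotate, Function.update_self]

theorem rotate_apply_of_forall_ne {e : Sym2 V} (he : ∀ i < j, e ≠ s(x, y i)) :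
    rotate c x y j e = c e := by
  induction j with
  | zero => rfl
  | succ j ih =>
    rw [rotate, Function.update_of_ne (he j j.lt_succ_self), ih fun i hi => he i (by omega)]

namespace IsFan

theorem insert_erase (hfan : IsFan E c x y ℓ) (hj : j ≤ ℓ) :
    insert s(x, y j) ((insert s(x, y 0) E).erase s(x, y j)) = insert s(x, y 0) E := by
  refine Finset.insert_erase ?_
  rcases j with _ | j
  · exact Finset.mem_insert_self _ _
  · exact Finset.mem_insert_of_mem (hfan.mem j hj)

theorem rotate_cases (hfan : IsFan E c x y ℓ) (hj : j ≤ ℓ) {e : Sym2 V}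
    (he : e ∈ (insert s(x, y 0) E).erase s(x, y j)) :
    (∃ i < j, e = s(x, y i) ∧ rotate c x y j e = c s(x, y (i + 1))) ∨
      (e ∈ E ∧ (∀ i < j, e ≠ s(x, y i)) ∧ rotate c x y j e = c e) := by
  by_cases h : ∃ i < j, e = s(x, y i)
  · obtain ⟨i, hi, rfl⟩ := h
    exact Or.inl ⟨i, hi, rfl,
      rotate_apply_of_lt (hfan.injOn.mono fun _ h => by simp at h ⊢; omega) hi⟩
  · push Not at h
    refine Or.inr ⟨?_, h, rotate_apply_of_forall_ne h⟩
    obtain ⟨hej, he⟩ := Finset.mem_erase.1 he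
    refine (Finset.mem_insert.1 he).resolve_left fun he0 => ?_
    rcases j with _ | j
    · exact hej he0
    · exact h 0 j.succ_pos he0

theorem isProperEdgeColoring_rotate (hfan : IsFan E c x y ℓ) (hc : IsProperEdgeColoring E k c)
    (hj : j ≤ ℓ) :
    IsProperEdgeColoring ((insert s(x, y 0) E).erase s(x, y j)) k (rotate c x y j) := by
  refine ⟨fun e he => ?_, fun e he f hf hef v hve hvf => ?_⟩
  · rcases hfan.rotate_cases hj he with ⟨i, hi, -, hrot⟩ | ⟨he, -, hrot⟩
    · rw [hrot]; exact hc.lt _ (hfan.mem i (by omega))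
    · rw [hrot]; exact hc.lt e he
  have hfj := (Finset.mem_erase.1 hf).1
  have hej := (Finset.mem_erase.1 he).1
  rcases hfan.rotate_cases hj he with ⟨i, hi, rfl, hrot⟩ | ⟨he, hei, hrot⟩ <;>
    rcases hfan.rotate_cases hj hf with ⟨i', hi', rfl, hrot'⟩ | ⟨hf, hfi, hrot'⟩ <;>
    rw [hrot, hrot']
  · refine hc.ne _ (hfan.mem i (by omega)) _ (hfan.mem i' (by omega)) (fun h => ?_) x
      (Sym2.mem_mk_left _ _) (Sym2.mem_mk_left _ _)
    exact hef (by rw [(hfan.mk_eq_mk_iff (by omega) (by omega)).1 h |> Nat.succ_injective])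
  · exact hfan.color_ne_of_lt hc hj hi hf hfj hfi hve hvf
  · exact (hfan.color_ne_of_lt hc hj hi' he hej hei hvf hve).symm
  · exact hc.ne e he f hf hef v hve hvf

theorem isMissing_rotate_center (hfan : IsFan E c x y ℓ) (hj : j ≤ ℓ) {γ : ℕ}
    (hγ : IsMissing E c γ x) :
    IsMissing ((insert s(x, y 0) E).erase s(x, y j)) (rotate c x y j) γ x := by
  intro e he hxe
  rcases hfan.rotate_cases hj he with ⟨i, hi, -, hrot⟩ | ⟨he, -, hrot⟩
  · rw [hrot]; exact hγ _ (hfan.mem i (by omega)) (Sym2.mem_mk_left _ _)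
  · rw [hrot]; exact hγ e he hxe

theorem isMissing_rotate_tip (hfan : IsFan E c x y ℓ) (hj : j ≤ ℓ) {γ : ℕ}
    (hγ : IsMissing E c γ (y j)) :
    IsMissing ((insert s(x, y 0) E).erase s(x, y j)) (rotate c x y j) γ (y j) := by
  intro e he hye
  rcases hfan.rotate_cases hj he with ⟨i, hi, rfl, -⟩ | ⟨he, -, hrot⟩
  · rcases Sym2.mem_iff.1 hye with h | h
    · exact absurd h (hfan.ne j hj)
    · exact absurd (hfan.injOn (Set.mem_Iic.2 hj) (Set.mem_Iic.2 (by omega)) h) (by omega)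
  · rw [hrot]; exact hγ e he hye

theorem kempeGraph_rotate_adj (hfan : IsFan E c x y ℓ) (hc : IsProperEdgeColoring E k c)
    {α β j₀ : ℕ} (hα : IsMissing E c α x) (hj : j < ℓ) (hβ : c s(x, y (j + 1)) = β)
    (hj₀ : j₀ ≤ ℓ) {u w : V}
    (h : (kempeGraph ((insert s(x, y 0) E).erase s(x, y j₀)) (rotate c x y j₀) α β).Adj u w) :
    (kempeGraph E c α β).Adj u w ∨ s(u, w) = s(x, y j) ∧ j < j₀ := by
  rw [kempeGraph_adj] at h ⊢
  obtain ⟨he, hcol, huw⟩ := h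
  rcases hfan.rotate_cases hj₀ he with ⟨i, hi, he, hrot⟩ | ⟨he, -, hrot⟩
  · rw [hrot] at hcol
    have hβ' : c s(x, y (i + 1)) = β :=
      hcol.resolve_left (hα _ (hfan.mem i (by omega)) (Sym2.mem_mk_left _ _))
    have hij : i = j := by
      by_contra hij
      exact hc.ne _ (hfan.mem i (by omega)) _ (hfan.mem j hj)
        (fun h => hij (Nat.succ_injective ((hfan.mk_eq_mk_iff (by omega) (by omega)).1 h))) x
        (Sym2.mem_mk_left _ _) (Sym2.mem_mk_left _ _) (hβ'.trans hβ.symm)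
    exact .inr ⟨hij ▸ he, hij ▸ hi⟩
  · rw [hrot] at hcol
    exact .inl ⟨he, hcol, huw⟩

theorem exists_insert_of_kempe [Fintype V] (hfan : IsFan E c x y ℓ)
    (hc : IsProperEdgeColoring E k c) (hE : ∀ e ∈ E, ¬e.IsDiag) {α β : ℕ} (hαk : α < k)
    (hβk : β < k) (hα : IsMissing E c α x) (hβ : IsMissing E c β (y ℓ)) (hj : j < ℓ)
    (hjβ : c s(x, y (j + 1)) = β) : ∃ c', IsProperEdgeColoring (insert s(x, y 0) E) k c' := by
  have hβj : IsMissing E c β (y j) := hjβ ▸ hfan.missing j hj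
  by_cases hreach : (kempeGraph E c α β).Reachable x (y j)
  · -- After rotating the whole fan, a Kempe chain from `y ℓ` to `x` would also contain `y j`.
    refine hfan.insert_erase le_rfl ▸
      (hfan.isProperEdgeColoring_rotate hc le_rfl).exists_insert_of_not_reachable hαk hβk
        (hfan.isMissing_rotate_center le_rfl hα) (hfan.isMissing_rotate_tip le_rfl hβ) fun h => ?_
    refine hc.not_reachable_of_isMissing hE (hfan.ne j (by omega)).symm (hfan.ne ℓ le_rfl).symm
      (fun h => hj.ne (hfan.injOn (Set.mem_Iic.2 hj.le) (Set.mem_Iic.2 le_rfl) h)) (.inl hα)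
      (.inr hβj) (.inr hβ) hreach (h.of_forall_adj fun u w huw => ?_)
    rcases hfan.kempeGraph_rotate_adj hc hα hj hjβ le_rfl huw with huw | ⟨huw, -⟩
    · exact huw.reachable
    · rcases Sym2.eq_iff.1 huw with ⟨rfl, rfl⟩ | ⟨rfl, rfl⟩
      exacts [hreach, hreach.symm]
  · refine hfan.insert_erase hj.le ▸
      (hfan.isProperEdgeColoring_rotate hc hj.le).exists_insert_of_not_reachable hαk hβk
        (hfan.isMissing_rotate_center hj.le hα) (hfan.isMissing_rotate_tip hj.le hβj)
        fun h => hreach (h.mono fun u w huw => ?_)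
    exact (hfan.kempeGraph_rotate_adj hc hα hj hjβ hj.le huw).resolve_right fun h => h.2.false

theorem exists_insert_or_update [Fintype V] (hfan : IsFan E c x y ℓ) (G : SimpleGraph V)
    [DecidableRel G.Adj] (hdeg : ∀ v, G.degree v < k) (hE : E ⊆ G.edgeFinset)
    (hc : IsProperEdgeColoring E k c) :
    (∃ c', IsProperEdgeColoring (insert s(x, y 0) E) k c') ∨
      ∃ z, IsFan E c x (Function.update y (ℓ + 1) z) (ℓ + 1) := by
  have hloop : ∀ e ∈ E, ¬e.IsDiag := fun e he => G.not_isDiag_of_mem_edgeFinset (hE he)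
  obtain ⟨α, hαk, hα⟩ := exists_isMissing (c := c) G hE (hdeg x)
  obtain ⟨β, hβk, hβ⟩ := exists_isMissing (c := c) G hE (hdeg (y ℓ))
  by_cases hβx : IsMissing E c β x
  · refine .inl ⟨_, hfan.insert_erase le_rfl ▸
      (hfan.isProperEdgeColoring_rotate hc le_rfl).update_insert hβk fun v hv => ?_⟩
    rcases Sym2.mem_iff.1 hv with h | h <;> rw [h]
    · exact hfan.isMissing_rotate_center le_rfl hβx
    · exact hfan.isMissing_rotate_tip le_rfl hβ
  obtain ⟨f, hf, hxf, hcf⟩ : ∃ f ∈ E, x ∈ f ∧ c f = β := by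
    simpa [IsMissing] using hβx
  obtain ⟨z, rfl⟩ := Sym2.mem_iff_exists.1 hxf
  by_cases hz : ∃ j < ℓ, z = y (j + 1)
  · obtain ⟨j, hj, rfl⟩ := hz
    exact .inl (hfan.exists_insert_of_kempe hc hloop hαk hβk hα hβ hj hcf)
  · push Not at hz
    refine .inr ⟨z, hfan.update hf ?_ (hcf ▸ hβ) hz⟩
    rintro rfl
    exact hloop _ hf (Sym2.mk_isDiag_iff.2 rfl)

theorem exists_insert [Fintype V] (hfan : IsFan E c x y ℓ) (G : SimpleGraph V)
    [DecidableRel G.Adj] (hdeg : ∀ v, G.degree v < k) (hE : E ⊆ G.edgeFinset)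
    (hc : IsProperEdgeColoring E k c) : ∃ c', IsProperEdgeColoring (insert s(x, y 0) E) k c' := by
  induction hn : Fintype.card V - ℓ using Nat.strong_induction_on generalizing y ℓ with
  | _ n ih =>
  rcases hfan.exists_insert_or_update G hdeg hE hc with h | ⟨z, hfan'⟩
  · exact h
  · have := hfan'.succ_le_card
    have h := ih _ (by omega) hfan' rfl
    rwa [Function.update_of_ne (Nat.succ_ne_zero ℓ).symm] at h

end IsFan

end Vizing

/-- Vizing's theorem. -/
theorem exists_isProperEdgeColoring [Fintype V] [DecidableEq V] (G : SimpleGraph V)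
    [DecidableRel G.Adj] {k : ℕ} (hdeg : ∀ v, G.degree v < k) :
    ∃ c, IsProperEdgeColoring G.edgeFinset k c := by
  refine Finset.induction_on' (motive := fun E => ∃ c, IsProperEdgeColoring E k c) G.edgeFinset
    ⟨fun _ => 0, by simp, by simp⟩ fun e E he hE heE ⟨c, hc⟩ => ?_
  induction e using Sym2.ind with
  | h x w =>
    have hfan : IsFan E c x (fun _ => w) 0 :=
      ⟨fun i hi i' hi' _ => by rw [Set.mem_Iic] at hi hi'; omega,
        fun _ _ => (G.ne_of_adj (G.mem_edgeSet.1 (G.mem_edgeFinset.1 he))).symm, heE,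
        by simp, by simp⟩
    exact hfan.exists_insert G hdeg hE hc

theorem IsProperEdgeColoring.exists_matching_decomposition [DecidableEq V]
    {E : Finset (Sym2 V)} {k : ℕ} {c : Sym2 V → ℕ} (hc : IsProperEdgeColoring E k c)
    (hE : ∀ e ∈ E, ¬e.IsDiag) {J : Finset ℕ} {a g : ℕ → ℕ} (hg : ∀ j ∈ J, g j < k)
    (hcard : ∀ i < k, #{e ∈ E | c e = i} = ∑ j ∈ J with g j = i, a j) :
    ∃ H : ℕ → Finset (Sym2 V), (∀ j ∈ J, H j ⊆ E) ∧
      (∀ j ∈ J, IsMatchingEdgeSet (H j)) ∧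
      (∀ i ∈ J, ∀ j ∈ J, i ≠ j → Disjoint (H i) (H j)) ∧ J.biUnion H = E ∧
      ∀ j ∈ J, #(H j) = a j := by
  have hsplit (i : ℕ) : ∃ d : Sym2 V → ℕ, i < k →
      (∀ e ∈ {e ∈ E | c e = i}, d e ∈ {j ∈ J | g j = i}) ∧
      ∀ j ∈ {j ∈ J | g j = i}, #{e ∈ {e ∈ E | c e = i} | d e = j} = a j := by
    by_cases hi : i < k
    · obtain ⟨d, hd⟩ := exists_card_filter_eq_of_card_eq_sum _ (hcard i hi)
      exact ⟨d, fun _ => hd⟩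
    · exact ⟨fun _ => 0, fun h => absurd h hi⟩
  choose d hd using hsplit
  have hdJ {e : Sym2 V} (he : e ∈ E) : d (c e) e ∈ {j ∈ J | g j = c e} :=
    (hd (c e) (hc.lt e he)).1 e (mem_filter.2 ⟨he, rfl⟩)
  have hclass (j : ℕ) :
      {e ∈ E | d (c e) e = j} = {e ∈ {e ∈ E | c e = g j} | d (g j) e = j} := by
    ext e
    simp only [mem_filter]
    constructor
    · rintro ⟨he, hj⟩
      have hg : g j = c e := hj ▸ (mem_filter.1 (hdJ he)).2
      exact ⟨⟨he, hg.symm⟩, hg ▸ hj⟩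
    · rintro ⟨⟨he, hce⟩, hj⟩
      exact ⟨he, hce ▸ hj⟩
  refine ⟨fun j => {e ∈ E | d (c e) e = j}, fun j _ => filter_subset _ _, fun j _ => ?_,
    fun i _ j _ hij => disjoint_filter.2 fun e _ hi hj => hij (hi.symm.trans hj), ?_,
    fun j hj => ?_⟩
  · simp only [hclass]
    exact (hc.isMatchingEdgeSet_filter hE (g j)).mono (filter_subset _ _)
  · refine Subset.antisymm (biUnion_subset.2 fun _ _ => filter_subset _ _) fun e he => ?_
    exact mem_biUnion.2 ⟨_, (mem_filter.1 (hdJ he)).1, mem_filter.2 ⟨he, rfl⟩⟩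
  · simp only [hclass]
    exact (hd (g j) (hg j hj)).2 j (mem_filter.2 ⟨hj, rfl⟩)

section Sizes

/-- `e(H_j)` of the statement, with `t = e - binom m 2`. -/
def asdSize (t j : ℕ) : ℕ := if j ≤ t then j else j - 1

theorem sum_asdSize (t m : ℕ) : ∑ j ∈ Icc 1 m, asdSize t j = m.choose 2 + min t m := by
  induction m with
  | zero => simp
  | succ m ih =>
    have hchoose : (m + 1).choose 2 = m.choose 2 + m := by
      rw [Nat.choose_succ_succ', Nat.choose_one_right, Nat.add_comm]
    rw [sum_Icc_succ_top (by omega), ih, hchoose, asdSize]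
    split_ifs <;> omega

def IsBalancedGrouping (m t k : ℕ) (g : ℕ → ℕ) : Prop :=
  (∀ j ∈ Icc 1 m, g j < k) ∧ ∀ i < k, ∀ i' < k,
    ∑ j ∈ Icc 1 m with g j = i, asdSize t j ≤ ∑ j ∈ Icc 1 m with g j = i', asdSize t j + 1

theorem isBalancedGrouping_of_even {m t k : ℕ} (hm : m = 2 * k) :
    IsBalancedGrouping m t k fun j => if j ≤ k then j - 1 else m - j := by
  refine ⟨fun j hj => ?_, ?_⟩
  · simp only [mem_Icc] at hj; dsimp only; split_ifs <;> omega
  have hfib {i : ℕ} (hi : i < k) :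
      {j ∈ Icc 1 m | (if j ≤ k then j - 1 else m - j) = i} = {i + 1, m - i} := by
    ext j; simp only [mem_filter, mem_Icc, mem_insert, mem_singleton]; split_ifs <;> omega
  intro i hi i' hi'
  rw [hfib hi, hfib hi', sum_pair (by omega), sum_pair (by omega)]
  simp only [asdSize]; split_ifs <;> omega

theorem isBalancedGrouping_of_odd_of_le {m t k : ℕ} (hm : m = 2 * k + 1) (ht : 1 ≤ t)
    (htk : t ≤ k) : IsBalancedGrouping m t k fun j =>
      if j = 1 ∨ j = k + 1 ∨ j = k + 2 then k - 1 else if j ≤ k then j - 2 else m - j := by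
  refine ⟨fun j hj => ?_, ?_⟩
  · simp only [mem_Icc] at hj; dsimp only; split_ifs <;> omega
  have hfib {i : ℕ} (hi : i < k) : {j ∈ Icc 1 m | (if j = 1 ∨ j = k + 1 ∨ j = k + 2 then
      k - 1 else if j ≤ k then j - 2 else m - j) = i} =
      if i = k - 1 then {1, k + 1, k + 2} else {i + 2, m - i} := by
    ext j; simp only [mem_filter, mem_Icc]; split_ifs <;> simp <;> omega
  have hsum {i : ℕ} (hi : i < k) : ∑ j ∈ Icc 1 m with (if j = 1 ∨ j = k + 1 ∨ j = k + 2
      then k - 1 else if j ≤ k then j - 2 else m - j) = i, asdSize t j =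
      if i = k - 1 then 2 * k + 2 else asdSize t (i + 2) + asdSize t (m - i) := by
    rw [hfib hi]
    split_ifs with h
    · rw [sum_insert (by simp; omega), sum_pair (by omega)]; simp only [asdSize]
      split_ifs <;> omega
    · rw [sum_pair (by omega)]
  intro i hi i' hi'
  rw [hsum hi, hsum hi']
  simp only [asdSize]; split_ifs <;> omega

theorem isBalancedGrouping_of_odd_of_lt {m t k : ℕ} (hm : m = 2 * k + 1) (hk : 0 < k)
    (htk : k < t) (htm : t ≤ m) : IsBalancedGrouping m t k fun j =>
      if j ≤ 2 ∨ j = m then k - 1 else if j ≤ k + 1 then j - 3 else m - 1 - j := by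
  refine ⟨fun j hj => ?_, ?_⟩
  · simp only [mem_Icc] at hj; dsimp only; split_ifs <;> omega
  have hfib {i : ℕ} (hi : i < k) : {j ∈ Icc 1 m | (if j ≤ 2 ∨ j = m then k - 1
      else if j ≤ k + 1 then j - 3 else m - 1 - j) = i} =
      if i = k - 1 then {1, 2, m} else {i + 3, m - 1 - i} := by
    ext j; simp only [mem_filter, mem_Icc]; split_ifs <;> simp <;> omega
  have hsum {i : ℕ} (hi : i < k) : ∑ j ∈ Icc 1 m with (if j ≤ 2 ∨ j = m then k - 1
      else if j ≤ k + 1 then j - 3 else m - 1 - j) = i, asdSize t j =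
      if i = k - 1 then asdSize t m + 3 else asdSize t (i + 3) + asdSize t (m - 1 - i) := by
    rw [hfib hi]
    split_ifs with h
    · rw [sum_insert (by simp; omega), sum_pair (by omega)]; simp only [asdSize]
      split_ifs <;> omega
    · rw [sum_pair (by omega)]
  intro i hi i' hi'
  rw [hsum hi, hsum hi']
  simp only [asdSize]; split_ifs <;> omega

/-- The groups pair `j` with `m + 1 - j`; for odd `m` one group is a triple, which has to be
chosen according to whether `t ≤ m / 2`. -/
theorem exists_isBalancedGrouping {m t : ℕ} (hm : 2 ≤ m) (ht : 1 ≤ t) (htm : t ≤ m) :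
    ∃ g, IsBalancedGrouping m t (m / 2) g := by
  obtain ⟨k, hk | hk⟩ := Nat.even_or_odd' m <;> obtain rfl : m / 2 = k := by omega
  · exact ⟨_, isBalancedGrouping_of_even hk⟩
  · by_cases htk : t ≤ m / 2
    · exact ⟨_, isBalancedGrouping_of_odd_of_le hk ht htk⟩
    · exact ⟨_, isBalancedGrouping_of_odd_of_lt hk (by omega) (by omega) htm⟩

end Sizes

end Development

theorem asd_into_matchings_of_small_max_degree_general {V : Type*} [Fintype V] [DecidableEq V]
    (G : SimpleGraph V) [DecidableRel G.Adj] (m : ℕ)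
    (hlb : m.choose 2 < G.edgeFinset.card) (hub : G.edgeFinset.card ≤ (m + 1).choose 2)
    (hdeg : ∀ v, G.degree v ≤ m / 2 - 1) :
    ∃ H : ℕ → Finset (Sym2 V),
      (∀ i ∈ Finset.Icc 1 m, H i ⊆ G.edgeFinset) ∧
      (∀ i ∈ Finset.Icc 1 m, IsMatchingEdgeSet (H i)) ∧
      (∀ i ∈ Finset.Icc 1 m, ∀ j ∈ Finset.Icc 1 m, i ≠ j → Disjoint (H i) (H j)) ∧
      (Finset.Icc 1 m).biUnion H = G.edgeFinset ∧
      (∀ i ∈ Finset.Icc 1 m,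
        (H i).card = if i ≤ G.edgeFinset.card - m.choose 2 then i else i - 1) := by
  have hloop : ∀ e ∈ G.edgeFinset, ¬e.IsDiag := fun _ he => G.not_isDiag_of_mem_edgeFinset he
  have hk : 2 ≤ m / 2 := by
    obtain ⟨e, he⟩ := card_pos.1 (by omega : 0 < #G.edgeFinset)
    induction e using Sym2.ind with
    | h u w =>
      have := (G.degree_pos_iff_exists_adj u).2 ⟨w, G.mem_edgeFinset.1 he⟩
      have := hdeg u
      omega
  have hchoose : (m + 1).choose 2 = m.choose 2 + m := by
    rw [Nat.choose_succ_succ', Nat.choose_one_right, Nat.add_comm]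
  set t := #G.edgeFinset - m.choose 2
  obtain ⟨c, hc⟩ := exists_isProperEdgeColoring G (k := m / 2) fun v => by have := hdeg v; omega
  obtain ⟨g, hg, hbal⟩ :=
    exists_isBalancedGrouping (m := m) (t := t) (by omega) (by omega) (by omega)
  have hsum :
      ∑ i ∈ range (m / 2), ∑ j ∈ Icc 1 m with g j = i, asdSize t j = #G.edgeFinset := by
    rw [sum_fiberwise_of_maps_to fun j hj => mem_range.2 (hg j hj), sum_asdSize]
    omega
  obtain ⟨c', hc', hcard⟩ := hc.exists_card_filter_eq hloop hsum hbal
  exact hc'.exists_matching_decomposition hloop hg fun i hi => hcard i hi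

/-- Fu's lemma: a graph with `binom m 2 < e ≤ binom (m+1) 2` edges and maximum degree at most
`⌊m/2⌋ - 1` has an ascending subgraph decomposition into matchings `H 1, …, H m` where,
with `t = e - binom m 2`, the `i`-th matching has `i` edges for `i ≤ t` and `i - 1` edges
for `i > t`. -/
theorem asd_into_matchings_of_small_max_degree {V : Type*} [Fintype V] [DecidableEq V]
    (G : SimpleGraph V) [DecidableRel G.Adj] (m : ℕ) (hm : 0 < m)
    (hlb : m.choose 2 < G.edgeFinset.card) (hub : G.edgeFinset.card ≤ (m + 1).choose 2)
    (hdeg : ∀ v, G.degree v ≤ m / 2 - 1) :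
    ∃ H : ℕ → Finset (Sym2 V),
      (∀ i ∈ Finset.Icc 1 m, H i ⊆ G.edgeFinset) ∧
      (∀ i ∈ Finset.Icc 1 m, IsMatchingEdgeSet (H i)) ∧
      (∀ i ∈ Finset.Icc 1 m, ∀ j ∈ Finset.Icc 1 m, i ≠ j → Disjoint (H i) (H j)) ∧
      (Finset.Icc 1 m).biUnion H = G.edgeFinset ∧
      (∀ i ∈ Finset.Icc 1 m,
        (H i).card = if i ≤ G.edgeFinset.card - m.choose 2 then i else i - 1) :=
  asd_into_matchings_of_small_max_degree_general G m hlb hub hdeg
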